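/- Minimizing the expected negative log conditional likelihood −E_{S∼T} E_{x∼P_S} E_{(o,t)∼M_S}[log p_θ(x_t | x_o, S)], where M_S first picks a uniformly random permutation and a uniformly random position and sets the target to the variable at that position with observed set its predecessors, is equivalent to minimizing the dimension-normalized expected negative log joint likelihood −E_{S∼T} E_{x∼P_S}[(1/d_S) log p_θ(x | S)], where p_θ(x | S) is defined via the chain rule using the model's conditionals. -/

import Mathlib

open Finset

/-- Marginal probability of the coordinates in `S` at the point `x`. -/
noncomputable def marg {d : ℕ} {A : Fin d → Type*} [∀ i, Fintype (A i)]
    [∀ i, DecidableEq (A i)] (p : (∀ i, A i) → ℝ) (S : Finset (Fin d))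
    (x : ∀ i, A i) : ℝ :=
  ∑ y : ∀ i, A i, if ∀ i ∈ S, y i = x i then p y else 0

/-- The set of variables appearing in the first `k` positions of the ordering `π`. -/
def prefixSet {d : ℕ} (π : Equiv.Perm (Fin d)) (k : ℕ) : Finset (Fin d) :=
  (Finset.univ.filter (fun j : Fin d => (j : ℕ) < k)).image π

lemma marg_pos {d : ℕ} {A : Fin d → Type*} [∀ i, Fintype (A i)]
    [∀ i, DecidableEq (A i)] {p : (∀ i, A i) → ℝ} (hp : ∀ y, 0 < p y)
    (S : Finset (Fin d)) (x : ∀ i, A i) : 0 < marg p S x := by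
  apply Finset.sum_pos' (fun y _ => by split <;> [exact (hp y).le; rfl])
  exact ⟨x, Finset.mem_univ _, by simp [hp x]⟩

lemma marg_empty {d : ℕ} {A : Fin d → Type*} [∀ i, Fintype (A i)]
    [∀ i, DecidableEq (A i)] (p : (∀ i, A i) → ℝ) (x : ∀ i, A i) :
    marg p ∅ x = ∑ y : ∀ i, A i, p y := by
  simp [marg]

lemma marg_univ {d : ℕ} {A : Fin d → Type*} [∀ i, Fintype (A i)]
    [∀ i, DecidableEq (A i)] (p : (∀ i, A i) → ℝ) (x : ∀ i, A i) :
    marg p Finset.univ x = p x := by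
  rw [marg]
  rw [show (fun y => if ∀ i ∈ Finset.univ, y i = x i then p y else 0)
      = fun y => if y = x then p y else 0 from ?_]
  · simp
  · funext y; congr 1
    simp [funext_iff]

lemma prefixSet_zero {d : ℕ} (π : Equiv.Perm (Fin d)) : prefixSet π 0 = ∅ := by
  simp [prefixSet]

lemma prefixSet_top {d : ℕ} (π : Equiv.Perm (Fin d)) : prefixSet π d = Finset.univ := by
  ext j
  simp only [prefixSet, Finset.mem_image, Finset.mem_filter, Finset.mem_univ, true_and]
  exact ⟨fun _ => trivial, fun _ => ⟨π.symm j, (π.symm j).isLt, by simp⟩⟩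

lemma telescope_key {d : ℕ} {A : Fin d → Type*} [∀ i, Fintype (A i)]
    [∀ i, DecidableEq (A i)] {p : (∀ i, A i) → ℝ} (hp : ∀ y, 0 < p y)
    (hp1 : ∑ y : ∀ i, A i, p y = 1) (π : Equiv.Perm (Fin d)) (x : ∀ i, A i) :
    ∑ i : Fin d, Real.log (marg p (prefixSet π ((i : ℕ) + 1)) x /
        marg p (prefixSet π (i : ℕ)) x) = Real.log (p x) := by
  have key : ∀ i : Fin d, Real.log (marg p (prefixSet π ((i : ℕ) + 1)) x /
        marg p (prefixSet π (i : ℕ)) x)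
      = Real.log (marg p (prefixSet π ((i : ℕ) + 1)) x)
        - Real.log (marg p (prefixSet π (i : ℕ)) x) := fun i =>
    Real.log_div (marg_pos hp _ x).ne' (marg_pos hp _ x).ne'
  simp only [key]
  rw [Fin.sum_univ_eq_sum_range
      (fun k => Real.log (marg p (prefixSet π (k + 1)) x)
        - Real.log (marg p (prefixSet π k) x)),
    Finset.sum_range_sub (fun k => Real.log (marg p (prefixSet π k) x))]
  rw [prefixSet_top, prefixSet_zero, marg_univ, marg_empty, hp1, Real.log_one, sub_zero]


/-- **Equivalence of the OCM masking objective and normalized joint likelihood.**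
Over a finite weighted set of contexts `C` (weights `w` summing to 1), each with
dimension `d c ≥ 1`, a data distribution `P c`, and a strictly positive model joint
`q c` (whose conditionals `p_θ(x_t | x_o, S)` are the ratios of its marginals, so that
the chain-rule products over all orderings agree), the expected negative log
conditional likelihood under the uniform masking distribution — pick `π` uniformly
among permutations, `i` uniformly among positions, target `t = π(i)`, observed set
`{π(j) : j < i}` — equals the dimension-normalized expected negative log joint
likelihood.  Since `q` ranges over all strictly positive models, the two objectives
are equal as functions of the parameters `θ`. -/
theorem ocm_masking_objective_eq_normalized_joint_objective
    {C : Type*} [Fintype C] (w : C → ℝ) (hw0 : ∀ c, 0 ≤ w c) (hw1 : ∑ c, w c = 1)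
    (d : C → ℕ) (hd : ∀ c, 1 ≤ d c)
    (A : (c : C) → Fin (d c) → Type*) [∀ c i, Fintype (A c i)] [∀ c i, DecidableEq (A c i)]
    (P : (c : C) → (∀ i, A c i) → ℝ)
    (hP0 : ∀ c y, 0 ≤ P c y) (hP1 : ∀ c, ∑ y : ∀ i, A c i, P c y = 1)
    (q : (c : C) → (∀ i, A c i) → ℝ)
    (hq0 : ∀ c y, 0 < q c y) (hq1 : ∀ c, ∑ y : ∀ i, A c i, q c y = 1) :
    - ∑ c, w c * ∑ x : ∀ i, A c i, P c x *
          (((Nat.factorial (d c) : ℝ) * d c)⁻¹ *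
            ∑ π : Equiv.Perm (Fin (d c)), ∑ i : Fin (d c),
              Real.log (marg (q c) (prefixSet π ((i : ℕ) + 1)) x /
                marg (q c) (prefixSet π (i : ℕ)) x))
      = - ∑ c, w c * ∑ x : ∀ i, A c i, P c x * ((d c : ℝ)⁻¹ * Real.log (q c x)) := by
  congr 1
  refine Finset.sum_congr rfl fun c _ => ?_
  congr 1
  refine Finset.sum_congr rfl fun x _ => ?_
  congr 1
  have hsum : ∀ π : Equiv.Perm (Fin (d c)),
      (∑ i : Fin (d c), Real.log (marg (q c) (prefixSet π ((i : ℕ) + 1)) x /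
        marg (q c) (prefixSet π (i : ℕ)) x)) = Real.log (q c x) :=
    fun π => telescope_key (hq0 c) (hq1 c) π x
  rw [Finset.sum_congr rfl (fun π _ => hsum π), Finset.sum_const, Finset.card_univ,
    Fintype.card_perm, Fintype.card_fin, nsmul_eq_mul]
  have hfac : ((d c).factorial : ℝ) ≠ 0 := Nat.cast_ne_zero.mpr (d c).factorial_ne_zero
  have hdc : (d c : ℝ) ≠ 0 := Nat.cast_ne_zero.mpr (Nat.one_le_iff_ne_zero.mp (hd c))
  field_simp
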